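/- Let A be diagonalizable on a finite-dimensional F-vector space V with distinct eigenvalues θ_0,...,θ_d and primitive idempotents E_0,...,E_d, where θ_{d-i} = −θ_i for all i. Define S = Σ_{i=0}^d (−1)^i E_i. Then S^2 = I, SA = AS, and for any A* ∈ End(V) satisfying Σ_{i even} E_i A* = Σ_{i odd} A* E_i and Σ_{i odd} E_i A* = Σ_{i even} A* E_i, one has S A* = −A* S. -/
import Mathlib


theorem stmt_18 {F V : Type*} [Field F] [AddCommGroup V] [Module F V]
    [FiniteDimensional F V] {d : ℕ}
    (θ : Fin (d + 1) → F) (hθinj : Function.Injective θ)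
    (hθanti : ∀ i : Fin (d + 1), θ ⟨d - (i : ℕ), by omega⟩ = -θ i)
    (E : Fin (d + 1) → Module.End F V)
    (hEE : ∀ i j : Fin (d + 1), E i * E j = if i = j then E i else 0)
    (hsum : ∑ i, E i = 1)
    (A : Module.End F V) (hA : A = ∑ i, θ i • E i)
    (As : Module.End F V)
    (halt1 : ∑ i ∈ Finset.univ.filter (fun i : Fin (d + 1) => Even (i : ℕ)), E i * As =
             ∑ i ∈ Finset.univ.filter (fun i : Fin (d + 1) => Odd (i : ℕ)), As * E i)
    (halt2 : ∑ i ∈ Finset.univ.filter (fun i : Fin (d + 1) => Odd (i : ℕ)), E i * As =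
             ∑ i ∈ Finset.univ.filter (fun i : Fin (d + 1) => Even (i : ℕ)), As * E i)
    (S : Module.End F V) (hS : S = ∑ i : Fin (d + 1), ((-1 : F) ^ (i : ℕ)) • E i) :
    S ^ 2 = 1 ∧ S * A = A * S ∧ S * As = -(As * S) := by
  classical
  have key : ∀ (c c' : Fin (d + 1) → F),
      (∑ i, c i • E i) * (∑ j, c' j • E j) = ∑ i, (c i * c' i) • E i := by
    intro c c'
    rw [Finset.sum_mul_sum]
    have : ∀ i : Fin (d + 1), ∑ j, (c i • E i) * (c' j • E j) = (c i * c' i) • E i := by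
      intro i
      have : ∀ j : Fin (d + 1), (c i • E i) * (c' j • E j)
          = if i = j then (c i * c' j) • E i else 0 := by
        intro j
        rw [smul_mul_smul_comm, hEE]
        split <;> simp
      rw [Finset.sum_congr rfl fun j _ => this j]
      simp
    exact Finset.sum_congr rfl fun i _ => this i
  have h1 : S ^ 2 = 1 := by
    rw [sq, hS, key]
    rw [← hsum]
    refine Finset.sum_congr rfl fun i _ => ?_
    rw [← pow_add, Even.neg_one_pow ⟨(i : ℕ), rfl⟩, one_smul]
  have h2 : S * A = A * S := by
    rw [hS, hA, key, key]
    exact Finset.sum_congr rfl fun i _ => by rw [mul_comm]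
  have hsplit : S = (∑ i ∈ Finset.univ.filter (fun i : Fin (d + 1) => Even (i : ℕ)), E i)
      - (∑ i ∈ Finset.univ.filter (fun i : Fin (d + 1) => Odd (i : ℕ)), E i) := by
    rw [hS, ← Finset.sum_filter_add_sum_filter_not Finset.univ
      (fun i : Fin (d + 1) => Even (i : ℕ))]
    have he : ∑ i ∈ Finset.univ.filter (fun i : Fin (d + 1) => Even (i : ℕ)),
        ((-1 : F) ^ (i : ℕ)) • E i
        = ∑ i ∈ Finset.univ.filter (fun i : Fin (d + 1) => Even (i : ℕ)), E i := by
      refine Finset.sum_congr rfl fun i hi => ?_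
      rw [Even.neg_one_pow (Finset.mem_filter.mp hi).2, one_smul]
    have ho : ∑ i ∈ Finset.univ.filter (fun i : Fin (d + 1) => ¬ Even (i : ℕ)),
        ((-1 : F) ^ (i : ℕ)) • E i
        = -∑ i ∈ Finset.univ.filter (fun i : Fin (d + 1) => Odd (i : ℕ)), E i := by
      have hf : Finset.univ.filter (fun i : Fin (d + 1) => ¬ Even (i : ℕ))
          = Finset.univ.filter (fun i : Fin (d + 1) => Odd (i : ℕ)) := by
        ext i; simp [Nat.not_even_iff_odd]
      rw [hf, ← Finset.sum_neg_distrib]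
      refine Finset.sum_congr rfl fun i hi => ?_
      rw [Odd.neg_one_pow (Finset.mem_filter.mp hi).2, neg_one_smul]
    rw [he, ho, sub_eq_add_neg]
  have h3 : S * As = -(As * S) := by
    rw [hsplit, sub_mul, mul_sub, Finset.sum_mul, Finset.sum_mul, halt1, halt2,
      Finset.mul_sum, Finset.mul_sum]
    abel
  exact ⟨h1, h2, h3⟩
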